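/- arXiv:math/0312162 — 5 statements merged into one kernel-verified Lean document; each statement's English description precedes it below -/
import Mathlib

section
/- Let S = ⊕ᵢ Sᵢ be the algebra of polynomial functions on T*ℝⁿ graded by degree in the fiber variables ξ, with the canonical Poisson bracket satisfying {Sᵢ, Sⱼ} ⊆ S_{i+j-1}. Then for any i ≥ -1 and k ≥ 1, the set {S ∈ S : {S, S_k} ⊆ Sᵢ} equals ℝ·1 + S_{i-k+1} (where Sⱼ = 0 for j < 0). -/
open MvPolynomial

/-- Weight grading by total `ξ`-degree. -/
def xiWeight (n : ℕ) : (Fin n ⊕ Fin n) → ℕ := Sum.elim (fun _ => 0) (fun _ => 1)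

/-- The canonical Poisson bracket on polynomial functions on `T*ℝⁿ`. -/
noncomputable def poissonBr {n : ℕ} (F G : MvPolynomial (Fin n ⊕ Fin n) ℝ) :
    MvPolynomial (Fin n ⊕ Fin n) ℝ :=
  ∑ i : Fin n,
    (pderiv (Sum.inr i) F * pderiv (Sum.inl i) G
      - pderiv (Sum.inl i) F * pderiv (Sum.inr i) G)

/-- `Sgr n j` is the homogeneous component `S_j` of fiber degree `j` (zero for `j < 0`). -/
noncomputable def Sgr (n : ℕ) (j : ℤ) : Submodule ℝ (MvPolynomial (Fin n ⊕ Fin n) ℝ) :=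
  if j < 0 then ⊥ else weightedHomogeneousSubmodule ℝ (xiWeight n) j.toNat

/-!
Since `{S_a, S_b} ⊆ S_{a+b-1}`, bracketing with a fixed `P ∈ S_k` is a linear map raising the
fiber degree by `k - 1`; it therefore sends the degree-`m` component of `S` to the
degree-`(m + k - 1)` component of `{S, P}`. So `{S, S_k} ⊆ S_i` forces every component of `S`
of degree `m ≠ i - k + 1` to Poisson-commute with `S_k`. For `k ≥ 1`, bracketing with `ξₘᵏ` and
`xᵐ ξₘᵏ` recovers (up to nonzero factors) `∂/∂xᵐ` and `∂/∂ξₘ`, so such a component is constant.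
-/

namespace MvPolynomial

variable {σ R : Type*} [CommSemiring R]

section Components

variable {M : Type*} [AddCommMonoid M] {w : σ → M}

theorem map_eq_finsum_weightedHomogeneousComponent {N : Type*} [AddCommMonoid N] [Module R N]
    (f : MvPolynomial σ R →ₗ[R] N) (φ : MvPolynomial σ R) :
    f φ = ∑ᶠ j, f (weightedHomogeneousComponent w j φ) := by
  conv_lhs => rw [← finsum_weightedHomogeneousComponent w φ]
  exact map_finsum f (weightedHomogeneousComponent_finsupp φ)

theorem eq_zero_iff_forall_weightedHomogeneousComponent_eq_zero {φ : MvPolynomial σ R} :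
    φ = 0 ↔ ∀ j, weightedHomogeneousComponent w j φ = 0 := by
  refine ⟨fun h j => by rw [h, map_zero], fun h => ?_⟩
  exact (map_eq_finsum_weightedHomogeneousComponent (w := w) LinearMap.id φ).trans
    (finsum_eq_zero_of_forall_eq_zero h)

theorem isWeightedHomogeneous_iff_forall_weightedHomogeneousComponent_eq_zero
    {φ : MvPolynomial σ R} {m : M} :
    φ.IsWeightedHomogeneous w m ↔ ∀ j ≠ m, weightedHomogeneousComponent w j φ = 0 := by
  refine ⟨fun h j hj => h.weightedHomogeneousComponent_ne j hj, fun h => ?_⟩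
  rw [← finsum_weightedHomogeneousComponent w φ, finsum_eq_single _ m h]
  exact weightedHomogeneousComponent_isWeightedHomogeneous m φ

end Components

theorem map_weightedHomogeneousComponent_of_isWeightedHomogeneous_add {M : Type*}
    [AddCancelCommMonoid M] {w : σ → M} (f : MvPolynomial σ R →ₗ[R] MvPolynomial σ R) {d : M}
    (hf : ∀ j φ, φ.IsWeightedHomogeneous w j → (f φ).IsWeightedHomogeneous w (j + d))
    (j : M) (φ : MvPolynomial σ R) :
    f (weightedHomogeneousComponent w j φ) = weightedHomogeneousComponent w (j + d) (f φ) := by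
  have hfin : (fun m => f (weightedHomogeneousComponent w m φ)).HasFiniteSupport :=
    (weightedHomogeneousComponent_finsupp (w := w) φ).subset fun m hm h =>
      hm (by simp only at h ⊢; rw [h, map_zero])
  rw [map_eq_finsum_weightedHomogeneousComponent (w := w) f φ, map_finsum _ hfin,
    finsum_eq_single _ j]
  · exact (hf j _ (weightedHomogeneousComponent_isWeightedHomogeneous j φ)
      ).weightedHomogeneousComponent_same.symm
  · intro m hm
    exact (hf m _ (weightedHomogeneousComponent_isWeightedHomogeneous m φ)
      ).weightedHomogeneousComponent_ne _ fun h => hm (add_right_cancel h).symm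

theorem pderiv_eq_zero_of_isWeightedHomogeneous_zero {w : σ → ℕ} {φ : MvPolynomial σ R}
    (hφ : φ.IsWeightedHomogeneous w 0) {i : σ} (hi : w i ≠ 0) : pderiv i φ = 0 := by
  ext m
  rw [coeff_pderiv, coeff_zero]
  by_contra h
  have := hφ (left_ne_zero_of_mul h)
  rw [map_add, Finsupp.weight_single, one_smul] at this
  exact hi (Nat.eq_zero_of_add_eq_zero_left this)

theorem eq_C_of_forall_pderiv_eq_zero [IsAddTorsionFree R]
    {φ : MvPolynomial σ R} (h : ∀ i, pderiv i φ = 0) : φ = C (constantCoeff φ) := by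
  classical
  ext m
  rw [coeff_C]
  split_ifs with hm
  · rw [← hm, ← constantCoeff_eq]
  obtain ⟨i, hi : m i ≠ 0⟩ := Finsupp.ne_iff.mp (Ne.symm hm)
  have hi' : 1 ≤ m i := Nat.one_le_iff_ne_zero.mpr hi
  have := coeff_pderiv (i := i) φ (m - Finsupp.single i 1)
  rw [h i, coeff_zero, tsub_add_cancel_of_le (Finsupp.single_le_iff.mpr hi'), Finsupp.coe_tsub,
    Pi.sub_apply, Finsupp.single_eq_same, ← Nat.cast_succ, Nat.succ_eq_add_one,
    Nat.sub_add_cancel hi', mul_comm, ← nsmul_eq_mul, eq_comm] at this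
  exact (nsmul_eq_zero_iff_right hi).mp this

end MvPolynomial

section Poisson

variable {n : ℕ}

local notation "𝒮" => MvPolynomial (Fin n ⊕ Fin n) ℝ

theorem poissonBr_antisymm (F G : 𝒮) : poissonBr F G = -poissonBr G F := by
  simp only [poissonBr, ← Finset.sum_neg_distrib, neg_sub]
  exact Finset.sum_congr rfl fun i _ => by ring

noncomputable def hamiltonian (F : 𝒮) : Derivation ℝ 𝒮 𝒮 :=
  ∑ i : Fin n,
    (pderiv (Sum.inr i) F • pderiv (Sum.inl i) - pderiv (Sum.inl i) F • pderiv (Sum.inr i))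

@[simp]
theorem hamiltonian_apply (F G : 𝒮) : hamiltonian F G = poissonBr F G := by
  rw [hamiltonian, ← Derivation.coeFnAddMonoidHom_apply, map_sum, Finset.sum_apply]
  simp [poissonBr, Finset.sum_sub_distrib]

noncomputable def poissonBrFlip (P : 𝒮) : 𝒮 →ₗ[ℝ] 𝒮 := -(hamiltonian P : 𝒮 →ₗ[ℝ] 𝒮)

@[simp]
theorem poissonBrFlip_apply (P F : 𝒮) : poissonBrFlip P F = poissonBr F P := by
  simp [poissonBrFlip, poissonBr_antisymm F P]

theorem poissonBr_X_inl (F : 𝒮) (m : Fin n) :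
    poissonBr F (X (Sum.inl m)) = pderiv (Sum.inr m) F := by
  classical
  simp [poissonBr, pderiv_X, Pi.single_apply]

theorem poissonBr_X_inr (F : 𝒮) (m : Fin n) :
    poissonBr F (X (Sum.inr m)) = -pderiv (Sum.inl m) F := by
  classical
  simp [poissonBr, pderiv_X, Pi.single_apply]

@[simp]
theorem poissonBr_C_left (c : ℝ) (P : 𝒮) : poissonBr (C c) P = 0 := by
  simp [poissonBr]

theorem Sgr_natCast (k : ℕ) : Sgr n k = weightedHomogeneousSubmodule ℝ (xiWeight n) k := by
  simp [Sgr]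

theorem Sgr_of_neg {j : ℤ} (hj : j < 0) : Sgr n j = ⊥ := if_pos hj

theorem mem_Sgr_iff {F : 𝒮} {j : ℤ} :
    F ∈ Sgr n j ↔ ∀ m : ℕ, (m : ℤ) ≠ j → weightedHomogeneousComponent (xiWeight n) m F = 0 := by
  unfold Sgr
  split_ifs with hj
  · rw [Submodule.mem_bot,
      eq_zero_iff_forall_weightedHomogeneousComponent_eq_zero (w := xiWeight n)]
    exact forall_congr' fun m => ⟨fun h _ => h, fun h => h (by omega)⟩
  · rw [mem_weightedHomogeneousSubmodule,
      isWeightedHomogeneous_iff_forall_weightedHomogeneousComponent_eq_zero]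
    exact forall_congr' fun m => imp_congr_left (by omega)

theorem pderiv_inr_mul_pderiv_inl_mem_Sgr {F G : 𝒮} {a b : ℤ} (hF : F ∈ Sgr n a)
    (hG : G ∈ Sgr n b) (i j : Fin n) :
    pderiv (Sum.inr i) F * pderiv (Sum.inl j) G ∈ Sgr n (a + b - 1) := by
  rcases lt_or_ge a 0 with ha | ha
  · rw [Sgr_of_neg ha, Submodule.mem_bot] at hF
    simp [hF]
  rcases lt_or_ge b 0 with hb | hb
  · rw [Sgr_of_neg hb, Submodule.mem_bot] at hG
    simp [hG]
  lift a to ℕ using ha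
  lift b to ℕ using hb
  rw [Sgr_natCast, mem_weightedHomogeneousSubmodule] at hF hG
  rcases Nat.eq_zero_or_pos a with rfl | ha
  · rw [pderiv_eq_zero_of_isWeightedHomogeneous_zero hF one_ne_zero, zero_mul]
    exact zero_mem _
  · rw [show (a : ℤ) + b - 1 = ((a - 1 + b : ℕ) : ℤ) by omega, Sgr_natCast]
    exact (hF.pderiv (by simp [xiWeight]; omega)).mul (hG.pderiv (by simp [xiWeight]))

theorem poissonBr_mem_Sgr {F G : 𝒮} {a b : ℤ} (hF : F ∈ Sgr n a) (hG : G ∈ Sgr n b) :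
    poissonBr F G ∈ Sgr n (a + b - 1) := by
  refine Submodule.sum_mem _ fun i _ => Submodule.sub_mem _ ?_ ?_
  · exact pderiv_inr_mul_pderiv_inl_mem_Sgr hF hG i i
  · rw [mul_comm, add_comm a]
    exact pderiv_inr_mul_pderiv_inl_mem_Sgr hG hF i i

theorem X_inr_pow_mem_Sgr (m : Fin n) (k : ℕ) : (X (Sum.inr m) : 𝒮) ^ k ∈ Sgr n k := by
  rw [Sgr_natCast, mem_weightedHomogeneousSubmodule]
  simpa [xiWeight] using (isWeightedHomogeneous_X ℝ (xiWeight n) (Sum.inr m)).pow k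

theorem X_inl_mul_X_inr_pow_mem_Sgr (m : Fin n) (k : ℕ) :
    (X (Sum.inl m) * X (Sum.inr m) ^ k : 𝒮) ∈ Sgr n k := by
  have := X_inr_pow_mem_Sgr m k
  rw [Sgr_natCast, mem_weightedHomogeneousSubmodule] at this ⊢
  simpa [xiWeight] using (isWeightedHomogeneous_X ℝ (xiWeight n) (Sum.inl m)).mul this

theorem eq_C_of_forall_poissonBr_eq_zero {k : ℕ} (hk : k ≠ 0) {F : 𝒮}
    (h : ∀ P ∈ Sgr n k, poissonBr F P = 0) : F = C (constantCoeff F) := by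
  have hx : ∀ m, pderiv (Sum.inl m) F = 0 := fun m => by
    have := h _ (X_inr_pow_mem_Sgr m k)
    rw [← hamiltonian_apply, Derivation.leibniz_pow, hamiltonian_apply, poissonBr_X_inr] at this
    simpa [hk, X_ne_zero] using this
  have hξ : ∀ m, pderiv (Sum.inr m) F = 0 := fun m => by
    have := h _ (X_inl_mul_X_inr_pow_mem_Sgr m k)
    rw [← hamiltonian_apply, Derivation.leibniz, Derivation.leibniz_pow, hamiltonian_apply,
      hamiltonian_apply, poissonBr_X_inl, poissonBr_X_inr, hx] at this
    simpa [X_ne_zero] using this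
  exact eq_C_of_forall_pderiv_eq_zero (Sum.forall.2 ⟨hx, hξ⟩)

theorem poissonBr_weightedHomogeneousComponent_eq_zero {i : ℤ} {k : ℕ} (hk : k ≠ 0) {S P : 𝒮}
    (hP : P ∈ Sgr n k) (hS : poissonBr S P ∈ Sgr n i) {m : ℕ} (hm : (m : ℤ) ≠ i - k + 1) :
    poissonBr (weightedHomogeneousComponent (xiWeight n) m S) P = 0 := by
  rw [← poissonBrFlip_apply,
    map_weightedHomogeneousComponent_of_isWeightedHomogeneous_add (d := k - 1)]
  · exact mem_Sgr_iff.1 (by rwa [poissonBrFlip_apply]) _ (by omega)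
  · intro j φ hφ
    have := poissonBr_mem_Sgr (a := j) (b := k) (by rwa [Sgr_natCast]) hP
    rwa [show (j : ℤ) + k - 1 = ((j + (k - 1) : ℕ) : ℤ) by omega, Sgr_natCast,
      ← poissonBrFlip_apply] at this

theorem exists_mem_Sgr_weightedHomogeneousComponent_eq (S : 𝒮) (e : ℤ) :
    ∃ T ∈ Sgr n e, ∀ m : ℕ, (m : ℤ) = e →
      weightedHomogeneousComponent (xiWeight n) m T =
        weightedHomogeneousComponent (xiWeight n) m S := by
  rcases lt_or_ge e 0 with he | he
  · exact ⟨0, by simp [Sgr_of_neg he], fun m hm => by omega⟩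
  · lift e to ℕ using he
    refine ⟨weightedHomogeneousComponent (xiWeight n) e S, ?_, fun m hm => ?_⟩
    · rw [Sgr_natCast]
      exact weightedHomogeneousComponent_mem _ _ _
    · rw [Nat.cast_inj.1 hm,
        (weightedHomogeneousComponent_isWeightedHomogeneous e S).weightedHomogeneousComponent_same]

end Poisson

theorem bracket_with_Sk_in_Si_iff_general {n : ℕ} (i : ℤ) (k : ℕ) (hk : 1 ≤ k) :
    {S : MvPolynomial (Fin n ⊕ Fin n) ℝ | ∀ P ∈ Sgr n k, poissonBr S P ∈ Sgr n i} =
      {S : MvPolynomial (Fin n ⊕ Fin n) ℝ |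
        ∃ c : ℝ, ∃ T ∈ Sgr n (i - k + 1), S = C c + T} := by
  ext S
  constructor
  · intro hS
    obtain ⟨T, hT, hTS⟩ := exists_mem_Sgr_weightedHomogeneousComponent_eq S (i - k + 1)
    refine ⟨constantCoeff (S - T), T, hT, sub_eq_iff_eq_add.1 ?_⟩
    refine eq_C_of_forall_poissonBr_eq_zero (k := k) (by omega) fun P hP => ?_
    rw [← poissonBrFlip_apply, map_eq_finsum_weightedHomogeneousComponent (w := xiWeight n)]
    refine finsum_eq_zero_of_forall_eq_zero fun m => ?_
    rw [map_sub]
    by_cases hm : (m : ℤ) = i - k + 1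
    · rw [hTS m hm, sub_self, map_zero]
    · rw [mem_Sgr_iff.1 hT m hm, sub_zero, poissonBrFlip_apply]
      exact poissonBr_weightedHomogeneousComponent_eq_zero (by omega) hP (hS P hP) hm
  · rintro ⟨c, T, hT, rfl⟩ P hP
    rw [← poissonBrFlip_apply, map_add, poissonBrFlip_apply, poissonBrFlip_apply,
      poissonBr_C_left, zero_add]
    convert poissonBr_mem_Sgr hT hP using 2
    ring

/-- For `i ≥ -1` and `k ≥ 1`, `{S : {S, S_k} ⊆ S_i} = ℝ·1 + S_{i-k+1}`. -/
theorem bracket_with_Sk_in_Si_iff {n : ℕ} (i : ℤ) (hi : -1 ≤ i) (k : ℕ) (hk : 1 ≤ k) :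
    {S : MvPolynomial (Fin n ⊕ Fin n) ℝ | ∀ P ∈ Sgr n k, poissonBr S P ∈ Sgr n i} =
      {S : MvPolynomial (Fin n ⊕ Fin n) ℝ |
        ∃ c : ℝ, ∃ T ∈ Sgr n (i - k + 1), S = C c + T} :=
  bracket_with_Sk_in_Si_iff_general i k hk
end

section
/- Let Vect(M) ⋉ C^∞(M) be the Lie algebra D¹ of first-order differential operators with bracket [X+f, Y+g] = [X,Y] + X(g) − Y(f). Given a vector field Y, constants κ, λ ∈ ℝ, a divergence operator div (an ℝ-linear map Vect(M) → C^∞(M) with div([X,Z]) = X(div Z) − Z(div X)), and a closed 1-form ω, the map C(X+f) = [Y, X+f] + κf + λ div(X) + ω(X) is a derivation of this Lie algebra. -/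
/-- Let `D¹ = Vect(M) ⋉ C^∞(M)` be the Lie algebra of first-order differential
operators, modelled abstractly with `A` a commutative `ℝ`-algebra (the functions)
and `Derivation ℝ A A` the vector fields, with bracket
`[X+f, Z+g] = [X,Z] + X(g) − Z(f)`. Given a vector field `Y`, constants `κ, λ`,
a divergence cocycle `dvg` and a closed 1-form `ω`, the map
`C(X+f) = [Y, X+f] + κf + λ div X + ω(X)` is a derivation of this Lie algebra. -/
theorem first_order_derivation_formula {A : Type*} [CommRing A] [Algebra ℝ A]
    (Y : Derivation ℝ A A) (κ lam : ℝ)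
    (dvg : Derivation ℝ A A →ₗ[ℝ] A)
    (hdvg : ∀ X Z : Derivation ℝ A A, dvg ⁅X, Z⁆ = X (dvg Z) - Z (dvg X))
    (ω : Derivation ℝ A A →ₗ[A] A)
    (hω : ∀ X Z : Derivation ℝ A A, ω ⁅X, Z⁆ = X (ω Z) - Z (ω X)) :
    ∀ (X Z : Derivation ℝ A A) (f g : A),
      ((⁅Y, ⁅X, Z⁆⁆, Y (X g - Z f) + κ • (X g - Z f) + lam • dvg ⁅X, Z⁆ + ω ⁅X, Z⁆) :
          Derivation ℝ A A × A) =
        (⁅⁅Y, X⁆, Z⁆, ⁅Y, X⁆ g - Z (Y f + κ • f + lam • dvg X + ω X)) +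
          (⁅X, ⁅Y, Z⁆⁆, X (Y g + κ • g + lam • dvg Z + ω Z) - ⁅Y, Z⁆ f) := by
  intro X Z f g
  refine Prod.ext ?_ ?_
  · show _ = (⁅⁅Y, X⁆, Z⁆ : Derivation ℝ A A) + ⁅X, ⁅Y, Z⁆⁆
    exact leibniz_lie Y X Z
  · simp only [Prod.snd_add, Derivation.commutator_apply, hdvg, hω, map_sub, map_add,
      map_smul, Derivation.map_smul_of_tower, smul_sub]
    ring
end

section
/- With C_{Y,κ,λ,ω} as above, the Lie bracket of two such derivations satisfies [C_Y, C_{Y'}] = C_{[Y,Y']}, [C_Y, C_div] = C_{d(div Y)} (the derivation associated to the closed 1-form d(div Y)), [C_Y, C_ω] = C_{d(ω(Y))}, [C_A, C_div] = C_div, and [C_A, C_ω] = C_ω, where C_Y = C_{Y,0,0,0}, C_A = C_{0,1,0,0}, C_div = C_{0,0,1,0}, C_ω = C_{0,0,0,ω}, and all unlisted brackets vanish. -/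
section

variable {A : Type*} [CommRing A] [Algebra ℝ A]

/-- The derivation `C_Y` of `D¹ = Vect ⋉ C^∞`: `C_Y(X+f) = [Y,X] + Y(f)`. -/
def CY (Y : Derivation ℝ A A) : Derivation ℝ A A × A → Derivation ℝ A A × A :=
  fun p => (⁅Y, p.1⁆, Y p.2)

/-- The derivation `C_A` of `D¹`: `C_A(X+f) = f`. -/
def CA : Derivation ℝ A A × A → Derivation ℝ A A × A :=
  fun p => (0, p.2)

/-- The derivation `C_θ` of `D¹` associated to a 1-cochain `θ` on vector fields
(for `θ = div` this is `C_div`, for `θ = ω` a closed 1-form it is `C_ω`):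
`C_θ(X+f) = θ(X)`. -/
def Cform (θ : Derivation ℝ A A → A) : Derivation ℝ A A × A → Derivation ℝ A A × A :=
  fun p => (0, θ p.1)

/-- Commutator of operators on `D¹`. -/
def opComm (F G : Derivation ℝ A A × A → Derivation ℝ A A × A) :
    Derivation ℝ A A × A → Derivation ℝ A A × A :=
  fun p => F (G p) - G (F p)

/-- The commutation relations of the derivations `C_{Y,κ,λ,ω}` of
`D¹ = Vect ⋉ C^∞`: `[C_Y,C_{Y'}] = C_{[Y,Y']}`, `[C_Y,C_div] = C_{d(div Y)}`,
`[C_Y,C_ω] = C_{d(ω(Y))}`, `[C_A,C_div] = C_div`, `[C_A,C_ω] = C_ω`, and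
all other brackets vanish. -/
theorem derD1_commutation_relations
    (dvg : Derivation ℝ A A →ₗ[ℝ] A)
    (hdvg : ∀ X Z : Derivation ℝ A A, dvg ⁅X, Z⁆ = X (dvg Z) - Z (dvg X))
    (ω ω' : Derivation ℝ A A →ₗ[A] A)
    (hω : ∀ X Z : Derivation ℝ A A, ω ⁅X, Z⁆ = X (ω Z) - Z (ω X))
    (hω' : ∀ X Z : Derivation ℝ A A, ω' ⁅X, Z⁆ = X (ω' Z) - Z (ω' X))
    (Y Y' : Derivation ℝ A A) :
    opComm (CY Y) (CY Y') = CY ⁅Y, Y'⁆ ∧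
    opComm (CY Y) (Cform dvg) = Cform (fun X => X (dvg Y)) ∧
    opComm (CY Y) (Cform ω) = Cform (fun X => X (ω Y)) ∧
    opComm CA (Cform dvg) = Cform dvg ∧
    opComm CA (Cform ω) = Cform ω ∧
    opComm CA (CY Y) = 0 ∧
    opComm (Cform dvg) (Cform ω) = 0 ∧
    opComm (Cform ω) (Cform ω') = 0 := by
  refine ⟨?_, ?_, ?_, ?_, ?_, ?_, ?_, ?_⟩
  · funext p
    simp only [opComm, CY, Prod.mk_sub_mk, Derivation.commutator_apply]
    exact Prod.ext (by rw [lie_lie]) rfl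
  all_goals
    funext p <;>
    simp only [opComm, CY, CA, Cform, Prod.mk_sub_mk, Prod.ext_iff,
      Derivation.commutator_apply, hdvg, hω, map_zero, Derivation.map_zero,
      lie_zero, zero_lie, Pi.zero_apply, Prod.fst_zero, Prod.snd_zero,
      sub_zero, zero_sub, sub_self, sub_sub_cancel, neg_zero] <;>
    constructor <;> rfl
end
end

section
/- Let κ, μ ∈ ℝ be constants and suppose Ω: ℝ → ℝ satisfies Ω_{t+s} = e^{κt}Ω_s + e^{μs}Ω_t for all t, s, Ω_0 = 0, and Ω is differentiable with Ω̇_0 = ω. Then Ω_t = ω∫₀ᵗ e^{κ(t−s)} e^{μs} ds. -/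
/-- Scalar specialization of the cocycle equation for one-parameter groups of
automorphisms: if `Ω : ℝ → ℝ` satisfies `Ω_{t+s} = e^{κt}Ω_s + e^{μs}Ω_t`, `Ω_0 = 0`,
and `Ω` is differentiable with `Ω̇_0 = ω`, then
`Ω_t = ω ∫₀ᵗ e^{κ(t−s)} e^{μs} ds`. -/
theorem scalar_cocycle_integral (κ μ ω : ℝ) (Ω : ℝ → ℝ)
    (hcoc : ∀ t s, Ω (t + s) = Real.exp (κ * t) * Ω s + Real.exp (μ * s) * Ω t)
    (h0 : Ω 0 = 0) (hdiff : Differentiable ℝ Ω) (hd0 : deriv Ω 0 = ω) :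
    ∀ t, Ω t = ω * ∫ s in (0:ℝ)..t, Real.exp (κ * (t - s)) * Real.exp (μ * s) := by
  -- Step 1: Ω' t = κ Ω t + e^{μ t} ω
  have hΩ' : ∀ t : ℝ, HasDerivAt Ω (κ * Ω t + Real.exp (μ * t) * ω) t := by
    intro t
    have h1 : HasDerivAt (fun s : ℝ => Ω (s + t)) (deriv Ω t) 0 := by
      have h := (hdiff (id (0:ℝ) + t)).hasDerivAt
      have := h.comp 0 ((hasDerivAt_id (0:ℝ)).add_const t)
      simpa [Function.comp_def] using this
    have h2 : HasDerivAt (fun s : ℝ => Real.exp (κ * s) * Ω t + Real.exp (μ * t) * Ω s)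
        (κ * Ω t + Real.exp (μ * t) * ω) 0 := by
      have ha : HasDerivAt (fun s : ℝ => Real.exp (κ * s)) κ 0 := by
        have := (Real.hasDerivAt_exp (κ * 0)).comp 0 ((hasDerivAt_id (0:ℝ)).const_mul κ)
        simpa [Function.comp_def] using this
      have hb := (hdiff 0).hasDerivAt
      rw [hd0] at hb
      have := (ha.mul_const (Ω t)).add (hb.const_mul (Real.exp (μ * t)))
      exact this
    have heq : (fun s : ℝ => Ω (s + t)) =
        fun s : ℝ => Real.exp (κ * s) * Ω t + Real.exp (μ * t) * Ω s := by
      funext s; exact hcoc s t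
    rw [heq] at h1
    have hder : deriv Ω t = κ * Ω t + Real.exp (μ * t) * ω := h1.unique h2
    have := (hdiff t).hasDerivAt
    rwa [hder] at this
  -- Step 2: g t = e^{-κ t} Ω t has derivative ω e^{(μ-κ) t}
  set g : ℝ → ℝ := fun t => Real.exp (-(κ * t)) * Ω t with hg
  have hg' : ∀ t : ℝ, HasDerivAt g (ω * Real.exp ((μ - κ) * t)) t := by
    intro t
    have he : HasDerivAt (fun s : ℝ => Real.exp (-(κ * s))) (-κ * Real.exp (-(κ * t))) t := by
      have := (Real.hasDerivAt_exp (-(κ * t))).comp t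
        (((hasDerivAt_id t).const_mul κ).neg)
      simpa [mul_comm, Function.comp_def] using this
    have := he.mul (hΩ' t)
    refine this.congr_deriv ?_
    have : Real.exp ((μ - κ) * t) = Real.exp (-(κ * t)) * Real.exp (μ * t) := by
      rw [← Real.exp_add]; ring_nf
    rw [this]; ring
  intro t
  have hint : IntervalIntegrable (fun s : ℝ => ω * Real.exp ((μ - κ) * s))
      MeasureTheory.volume 0 t :=
    (Continuous.intervalIntegrable (by continuity) 0 t)
  have hftc := intervalIntegral.integral_eq_sub_of_hasDerivAt
    (fun x _ => hg' x) hint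
  have hg0 : g 0 = 0 := by simp [hg, h0]
  have hgt : g t = ∫ s in (0:ℝ)..t, ω * Real.exp ((μ - κ) * s) := by
    rw [hftc, hg0, sub_zero]
  -- Step 3: conclude
  have hΩt : Ω t = Real.exp (κ * t) * g t := by
    rw [hg]; simp only []
    rw [← mul_assoc, ← Real.exp_add]; simp
  rw [hΩt, hgt, ← intervalIntegral.integral_const_mul, ← intervalIntegral.integral_const_mul]
  apply intervalIntegral.integral_congr
  intro s _
  show Real.exp (κ * t) * (ω * Real.exp ((μ - κ) * s)) =
    ω * (Real.exp (κ * (t - s)) * Real.exp (μ * s))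
  have h : κ * (t - s) + μ * s = κ * t + (μ - κ) * s := by ring
  rw [← Real.exp_add, h, Real.exp_add]; ring
end

section
/- Let C be a derivation of the Poisson algebra S of polynomial functions on T*ℝⁿ (as a Lie algebra under the canonical Poisson bracket) that vanishes on all elements of fiber degree ≤ k for some k ≥ 1, maps S_{k+1} into S_0 = functions of x alone, and satisfies C({X, S}) = {X, C(S)} for all fiberwise-linear X. If moreover C(X(f)·X^{k+1}) = 0 for all fiberwise-linear X and all f ∈ S_0, then C vanishes on S_{k+1}. -/
open MvPolynomial

/-- Vandermonde inversion: if all the powers `(h + t)^m` lie in a submodule, so does `h`. -/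
lemma mem_span_of_pow_add {A : Type*} [CommRing A] [Algebra ℝ A] (T : Submodule ℝ A)
    (m : ℕ) (hm : 0 < m) (h : A)
    (H : ∀ t : ℝ, (h + algebraMap ℝ A t) ^ m ∈ T) : h ∈ T := by
  classical
  set u : Fin (m+1) → A := fun j => (m.choose (m - (j:ℕ))) • h ^ (m - (j:ℕ)) with hu
  set x : Fin (m+1) → ℝ := fun t => ((t : ℕ) : ℝ) with hx
  set B : Matrix (Fin (m+1)) (Fin (m+1)) ℝ := Matrix.vandermonde x with hB
  have hdet : B.det ≠ 0 := by
    rw [hB, Matrix.det_vandermonde]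
    apply Finset.prod_ne_zero_iff.2
    intro i _
    apply Finset.prod_ne_zero_iff.2
    intro j hj
    have hij : i < j := Finset.mem_Ioi.1 hj
    have : x i < x j := by
      simp only [hx]
      exact_mod_cast Fin.lt_iff_val_lt_val.1 hij
    exact sub_ne_zero.2 (ne_of_gt this)
  set v : Fin (m+1) → A := fun t => (h + algebraMap ℝ A (x t)) ^ m with hv
  have hexp : ∀ t, v t = ∑ j : Fin (m+1), B t j • u j := by
    intro t
    show (h + algebraMap ℝ A (x t)) ^ m = _
    rw [add_pow h (algebraMap ℝ A (x t)) m]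
    rw [← Fin.sum_univ_eq_sum_range
      (fun j => h ^ j * algebraMap ℝ A (x t) ^ (m - j) * (m.choose j : A))]
    rw [← (Equiv.sum_comp (Fin.revPerm) _)]
    apply Finset.sum_congr rfl
    intro j _
    simp only [Fin.revPerm_apply, Fin.val_rev]
    have hj : (j : ℕ) ≤ m := Nat.lt_succ_iff.1 j.2
    have h1 : m + 1 - ((j:ℕ) + 1) = m - (j:ℕ) := by omega
    have h2 : m - (m - (j:ℕ)) = (j:ℕ) := by omega
    rw [h1, hu, hB]
    simp only [Matrix.vandermonde_apply, h2]
    rw [← map_pow, Algebra.smul_def]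
    push_cast
    ring_nf
  have hBinv := Matrix.nonsing_inv_mul B (isUnit_iff_ne_zero.2 hdet)
  have key : ∀ j, u j = ∑ t : Fin (m+1), (B⁻¹ j t) • v t := by
    intro j
    calc u j = ∑ j' : Fin (m+1), ((1 : Matrix (Fin (m+1)) (Fin (m+1)) ℝ) j j') • u j' := by
          simp [Matrix.one_apply, Finset.sum_ite_eq, Finset.mem_univ]
      _ = ∑ j' : Fin (m+1), ((B⁻¹ * B) j j') • u j' := by rw [hBinv]
      _ = ∑ t : Fin (m+1), (B⁻¹ j t) • v t := by
          simp only [Matrix.mul_apply, hexp, Finset.smul_sum, Finset.sum_smul, smul_smul]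
          rw [Finset.sum_comm]
  have hj1 : ((⟨m - 1, by omega⟩ : Fin (m+1)) : ℕ) = m - 1 := rfl
  have hmem : u ⟨m - 1, by omega⟩ ∈ T := by
    rw [key]
    exact Submodule.sum_mem _ (fun t _ => Submodule.smul_mem _ _ (H (x t)))
  have hval : u ⟨m - 1, by omega⟩ = (m : ℝ) • h := by
    rw [hu]
    simp only [hj1]
    have h1 : m - (m - 1) = 1 := by omega
    rw [h1, Nat.choose_one_right, pow_one, Nat.cast_smul_eq_nsmul]
  rw [hval] at hmem
  have := Submodule.smul_mem T ((m : ℝ)⁻¹) hmem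
  rwa [smul_smul, inv_mul_cancel₀ (by exact_mod_cast hm.ne'), one_smul] at this

lemma weight_xiWeight {n : ℕ} (d : (Fin n ⊕ Fin n) →₀ ℕ) :
    Finsupp.weight (xiWeight n) d = ∑ i : Fin n, d (Sum.inr i) := by
  rw [Finsupp.weight_apply, Finsupp.sum_fintype _ _ (by simp)]
  rw [Fintype.sum_sum_type]
  simp [xiWeight]

lemma pderiv_inr_of_deg0 {n : ℕ} {g : MvPolynomial (Fin n ⊕ Fin n) ℝ}
    (hg : g.IsWeightedHomogeneous (xiWeight n) 0) (i : Fin n) :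
    pderiv (Sum.inr i) g = 0 := by
  rw [g.as_sum, map_sum]
  apply Finset.sum_eq_zero
  intro d hd
  have h0 : Finsupp.weight (xiWeight n) d = 0 := hg (mem_support_iff.1 hd)
  rw [weight_xiWeight] at h0
  have : d (Sum.inr i) = 0 := Finset.sum_eq_zero_iff.1 h0 i (Finset.mem_univ i)
  rw [pderiv_monomial, this]
  simp

lemma poisson_lin_xi {n : ℕ} (g : MvPolynomial (Fin n ⊕ Fin n) ℝ)
    (hg : g.IsWeightedHomogeneous (xiWeight n) 0) (i : Fin n) :
    poissonBr (g * X (Sum.inr i)) (X (Sum.inl i)) = g := by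
  classical
  rw [poissonBr]
  rw [Finset.sum_eq_single i]
  · rw [pderiv_X_self, pderiv_mul, pderiv_X_self, pderiv_inr_of_deg0 hg]
    rw [pderiv_X_of_ne (by simp), pderiv_mul]
    simp
  · intro b _ hb
    rw [pderiv_X_of_ne (by simp [Ne.symm hb]), pderiv_X_of_ne (by simp)]
    ring
  · simp

lemma poisson_xmxi {n : ℕ} (m j : Fin n) (S : MvPolynomial (Fin n ⊕ Fin n) ℝ) :
    poissonBr (X (Sum.inl m) * X (Sum.inr j)) S
      = X (Sum.inl m) * pderiv (Sum.inl j) S - X (Sum.inr j) * pderiv (Sum.inr m) S := by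
  classical
  rw [poissonBr]
  have key : ∀ i : Fin n,
      (pderiv (Sum.inr i) (X (Sum.inl m) * X (Sum.inr j)) * pderiv (Sum.inl i) S
        - pderiv (Sum.inl i) (X (Sum.inl m) * X (Sum.inr j)) * pderiv (Sum.inr i) S)
      = (if i = j then X (Sum.inl m) * pderiv (Sum.inl j) S else 0)
        - (if i = m then X (Sum.inr j) * pderiv (Sum.inr m) S else 0) := by
    intro i
    simp only [pderiv_mul, pderiv_X, Pi.single_apply, Sum.inl.injEq, Sum.inr.injEq,
      reduceCtorEq, if_false, if_true, mul_ite, ite_mul, mul_zero, zero_mul, mul_one,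
      one_mul, add_zero, zero_add]
    split_ifs <;> (try subst_vars) <;> (try simp_all)
  rw [Finset.sum_congr rfl (fun i _ => key i)]
  rw [Finset.sum_sub_distrib]
  rw [Finset.sum_ite_eq' Finset.univ j, Finset.sum_ite_eq' Finset.univ m]
  simp

lemma poissonBr_zero_right {n : ℕ} (F : MvPolynomial (Fin n ⊕ Fin n) ℝ) :
    poissonBr F 0 = 0 := by
  simp [poissonBr]

/-- Let `C` be a (linear) derivation of the Poisson algebra of polynomial functions on
`T*ℝⁿ` vanishing on all elements of fiber degree `≤ k` (`k ≥ 1`), mapping `S_{k+1}`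
into `S_0`, intertwining the adjoint action of fiberwise-linear elements, and
vanishing on all products `X(f)·X^{k+1}` with `X` fiberwise linear and `f ∈ S_0`.
Then `C` vanishes on `S_{k+1}`. -/
theorem derivation_vanishes_on_Skp1 {n k : ℕ} (hk : 1 ≤ k)
    (C : MvPolynomial (Fin n ⊕ Fin n) ℝ →ₗ[ℝ] MvPolynomial (Fin n ⊕ Fin n) ℝ)
    (hvanish : ∀ S : MvPolynomial (Fin n ⊕ Fin n) ℝ,
      weightedTotalDegree (xiWeight n) S ≤ k → C S = 0)
    (hmap : ∀ S : MvPolynomial (Fin n ⊕ Fin n) ℝ,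
      S.IsWeightedHomogeneous (xiWeight n) (k + 1) →
        (C S).IsWeightedHomogeneous (xiWeight n) 0)
    (hint : ∀ X : MvPolynomial (Fin n ⊕ Fin n) ℝ,
      X.IsWeightedHomogeneous (xiWeight n) 1 →
        ∀ S, C (poissonBr X S) = poissonBr X (C S))
    (hpow : ∀ X : MvPolynomial (Fin n ⊕ Fin n) ℝ,
      X.IsWeightedHomogeneous (xiWeight n) 1 →
        ∀ f : MvPolynomial (Fin n ⊕ Fin n) ℝ,
          f.IsWeightedHomogeneous (xiWeight n) 0 →
            C (poissonBr X f * X ^ (k + 1)) = 0) :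
    ∀ S : MvPolynomial (Fin n ⊕ Fin n) ℝ,
      S.IsWeightedHomogeneous (xiWeight n) (k + 1) → C S = 0 := by
  classical
  set R := MvPolynomial (Fin n ⊕ Fin n) ℝ
  -- Step A: pure powers
  have pure : ∀ (i : Fin n) (h : R), h.IsWeightedHomogeneous (xiWeight n) 0 →
      C (h * X (Sum.inr i) ^ (k+1)) = 0 := by
    intro i
    have pureL : True := trivial
    set L : R →ₗ[ℝ] R := C.comp (LinearMap.mulRight ℝ (X (Sum.inr i) ^ (k+1))) with hLdef
    have hL : ∀ g : R, g.IsWeightedHomogeneous (xiWeight n) 0 → L (g ^ (k+2)) = 0 := by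
      intro g hg
      have hX : IsWeightedHomogeneous (xiWeight n) (g * X (Sum.inr i)) 1 := by
        have := hg.mul (isWeightedHomogeneous_X ℝ (xiWeight n) (Sum.inr i))
        simpa [xiWeight] using this
      have hf : IsWeightedHomogeneous (xiWeight n) (X (Sum.inl i) : R) 0 := by
        have := isWeightedHomogeneous_X ℝ (xiWeight n) (Sum.inl i)
        simpa [xiWeight] using this
      have hzero := hpow _ hX _ hf
      rw [poisson_lin_xi g hg i, mul_pow] at hzero
      have heq : g * (g ^ (k+1) * X (Sum.inr i) ^ (k+1)) = g ^ (k+2) * X (Sum.inr i) ^ (k+1) := by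
        ring
      rw [heq] at hzero
      simpa [hLdef, LinearMap.mulRight_apply] using hzero
    intro h hh
    have hmem : h ∈ Submodule.span ℝ
        {p : R | ∃ g : R, g.IsWeightedHomogeneous (xiWeight n) 0 ∧ p = g ^ (k+2)} := by
      apply mem_span_of_pow_add _ (k+2) (by omega)
      intro t
      apply Submodule.subset_span
      refine ⟨h + algebraMap ℝ R t, ?_, rfl⟩
      have hC : IsWeightedHomogeneous (xiWeight n) (algebraMap ℝ R t) 0 := by
        rw [MvPolynomial.algebraMap_eq]
        exact isWeightedHomogeneous_C _ _
      exact hh.add hC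
    have hle : Submodule.span ℝ
        {p : R | ∃ g : R, g.IsWeightedHomogeneous (xiWeight n) 0 ∧ p = g ^ (k+2)}
          ≤ LinearMap.ker L := by
      rw [Submodule.span_le]
      rintro p ⟨g, hg, rfl⟩
      exact hL g hg
    have := hle hmem
    rw [LinearMap.mem_ker] at this
    simpa [hLdef, LinearMap.mulRight_apply] using this
  -- Step B: monomials of ξ-degree k+1, by induction on (k+1) - max exponent
  have main : ∀ (N : ℕ) (D : (Fin n ⊕ Fin n) →₀ ℕ),
      (∑ i : Fin n, D (Sum.inr i)) = k + 1 →
      (k + 1) - (Finset.univ.sup fun i => D (Sum.inr i)) ≤ N →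
      C (monomial D 1) = 0 := by
    have purecase : ∀ (D : (Fin n ⊕ Fin n) →₀ ℕ) (i0 : Fin n),
        (∑ i : Fin n, D (Sum.inr i)) = k + 1 → D (Sum.inr i0) = k + 1 →
        C (monomial D 1) = 0 := by
      intro D i0 hsum heq
      have hall : ∀ i, i ≠ i0 → D (Sum.inr i) = 0 := by
        have hz : ∑ i ∈ Finset.univ.erase i0, D (Sum.inr i) = 0 := by
          have h2 : (∑ i ∈ Finset.univ.erase i0, D (Sum.inr i)) + D (Sum.inr i0)
              = ∑ i : Fin n, D (Sum.inr i) :=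
            Finset.sum_erase_add _ _ (Finset.mem_univ i0)
          omega
        intro i hi
        exact Finset.sum_eq_zero_iff.1 hz i (Finset.mem_erase.2 ⟨hi, Finset.mem_univ i⟩)
      set Dx := D - Finsupp.single (Sum.inr i0) (k+1) with hDx
      have hadd : Dx + Finsupp.single (Sum.inr i0) (k+1) = D := by
        ext s
        rcases s with a | a
        · simp [hDx, Finsupp.tsub_apply, Finsupp.single_apply]
        · by_cases ha : a = i0
          · subst ha
            simp [hDx, Finsupp.tsub_apply, Finsupp.single_apply, heq]
          · have ha2 : i0 ≠ a := fun h => ha h.symm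
            simp [hDx, Finsupp.tsub_apply, Finsupp.single_apply, ha2, hall a ha]
      have hhom : IsWeightedHomogeneous (xiWeight n) (monomial Dx 1 : R) 0 := by
        apply isWeightedHomogeneous_monomial
        rw [weight_xiWeight]
        apply Finset.sum_eq_zero
        intro i _
        by_cases hi : i = i0
        · subst hi
          simp [hDx, Finsupp.tsub_apply, Finsupp.single_apply, heq]
        · have hi2 : i0 ≠ i := fun h => hi h.symm
          simp [hDx, Finsupp.tsub_apply, Finsupp.single_apply, hi2, hall i hi]
      have hfact : (monomial D 1 : R) = monomial Dx 1 * X (Sum.inr i0) ^ (k+1) := by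
        rw [X_pow_eq_monomial, monomial_mul, one_mul, hadd]
      rw [hfact]
      exact pure i0 _ hhom
    intro N
    induction N with
    | zero =>
      intro D hsum hle
      have hn : (Finset.univ : Finset (Fin n)).Nonempty := by
        rcases (Finset.univ : Finset (Fin n)).eq_empty_or_nonempty with h | h
        · rw [h, Finset.sum_empty] at hsum; omega
        · exact h
      obtain ⟨i0, -, hi0⟩ := Finset.exists_mem_eq_sup Finset.univ hn fun i => D (Sum.inr i)
      have hbd : D (Sum.inr i0) ≤ k + 1 := by
        have h2 : D (Sum.inr i0) ≤ ∑ i : Fin n, D (Sum.inr i) :=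
          Finset.single_le_sum (f := fun i => D (Sum.inr i))
            (fun _ _ => Nat.zero_le _) (Finset.mem_univ i0)
        omega
      exact purecase D i0 hsum (by omega)
    | succ N ih =>
      intro D hsum hle
      have hn : (Finset.univ : Finset (Fin n)).Nonempty := by
        rcases (Finset.univ : Finset (Fin n)).eq_empty_or_nonempty with h | h
        · rw [h, Finset.sum_empty] at hsum; omega
        · exact h
      obtain ⟨i0, -, hi0⟩ := Finset.exists_mem_eq_sup Finset.univ hn fun i => D (Sum.inr i)
      have hbd : D (Sum.inr i0) ≤ k + 1 := by
        have h2 : D (Sum.inr i0) ≤ ∑ i : Fin n, D (Sum.inr i) :=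
          Finset.single_le_sum (f := fun i => D (Sum.inr i))
            (fun _ _ => Nat.zero_le _) (Finset.mem_univ i0)
        omega
      by_cases heq : D (Sum.inr i0) = k + 1
      · exact purecase D i0 hsum heq
      -- step case
      have hlt : D (Sum.inr i0) < k + 1 := lt_of_le_of_ne hbd heq
      obtain ⟨j, hji0, hj1⟩ : ∃ j, j ≠ i0 ∧ 1 ≤ D (Sum.inr j) := by
        by_contra hcon
        push_neg at hcon
        have : ∑ i : Fin n, D (Sum.inr i) = D (Sum.inr i0) :=
          Finset.sum_eq_single_of_mem i0 (Finset.mem_univ i0)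
            (fun b _ hb => by have := hcon b hb; omega)
        omega
      set E := D - Finsupp.single (Sum.inr j) 1 with hE
      have hDE : E + Finsupp.single (Sum.inr j) 1 = D := by
        ext s
        rcases s with a | a
        · simp [hE, Finsupp.tsub_apply, Finsupp.single_apply]
        · by_cases ha : a = j
          · subst ha
            have hone : (Finsupp.single (Sum.inr a : Fin n ⊕ Fin n) (1:ℕ)) (Sum.inr a) = 1 := by
              simp
            simp only [hE, Finsupp.add_apply, Finsupp.tsub_apply, hone]
            omega
          · have ha2 : j ≠ a := fun h => ha h.symm
            simp [hE, Finsupp.tsub_apply, Finsupp.single_apply, ha2]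
      set D' := E + Finsupp.single (Sum.inr i0) 1 with hD'
      have hEi0 : E (Sum.inr i0) = D (Sum.inr i0) := by
        simp [hE, Finsupp.tsub_apply, Finsupp.single_apply, hji0]
      have hD'i0 : D' (Sum.inr i0) = D (Sum.inr i0) + 1 := by
        simp [hD', Finsupp.add_apply, Finsupp.single_apply, hEi0]
      have hsingle_sum : ∀ (i' : Fin n),
          (∑ i : Fin n, (Finsupp.single (Sum.inr i' : Fin n ⊕ Fin n) 1) (Sum.inr i)) = 1 := by
        intro i'
        simp [Finsupp.single_apply, Sum.inr.injEq]
      have hsumE : ∑ i : Fin n, E (Sum.inr i) = k := by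
        have h1 : (∑ i : Fin n,
              ((E + Finsupp.single (Sum.inr j) 1 : (Fin n ⊕ Fin n) →₀ ℕ)) (Sum.inr i))
            = (∑ i : Fin n, E (Sum.inr i)) + 1 := by
          simp only [Finsupp.add_apply, Finset.sum_add_distrib, hsingle_sum]
        rw [hDE] at h1
        omega
      have hsum' : ∑ i : Fin n, D' (Sum.inr i) = k + 1 := by
        simp only [hD', Finsupp.add_apply, Finset.sum_add_distrib, hsingle_sum, hsumE]
      have hsup' : (k + 1) - (Finset.univ.sup fun i => D' (Sum.inr i)) ≤ N := by
        have h1 : D' (Sum.inr i0) ≤ Finset.univ.sup fun i => D' (Sum.inr i) :=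
          Finset.le_sup (f := fun i => D' (Sum.inr i)) (Finset.mem_univ i0)
        omega
      have IH := ih D' hsum' hsup'
      have hXhom : IsWeightedHomogeneous (xiWeight n)
          ((X (Sum.inl i0) * X (Sum.inr j)) : R) 1 := by
        have := (isWeightedHomogeneous_X ℝ (xiWeight n) (Sum.inl i0)).mul
          (isWeightedHomogeneous_X ℝ (xiWeight n) (Sum.inr j))
        simpa [xiWeight] using this
      have hbr := hint _ hXhom (monomial D' 1)
      rw [IH, poissonBr_zero_right, poisson_xmxi, pderiv_monomial, pderiv_monomial] at hbr
      -- identify the two terms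
      have hsub2 : D' - Finsupp.single (Sum.inr i0) 1 = E := by
        ext s
        simp only [hD', Finsupp.tsub_apply, Finsupp.add_apply]
        omega
      have hterm2 : (X (Sum.inr j) : R) * monomial (D' - Finsupp.single (Sum.inr i0) 1)
          ((1:ℝ) * (D' (Sum.inr i0) : ℝ))
          = ((D (Sum.inr i0) + 1 : ℕ) : ℝ) • monomial D (1:ℝ) := by
        rw [hsub2]
        have hXj : (X (Sum.inr j) : R) = monomial (Finsupp.single (Sum.inr j) 1) 1 := by
          rw [← pow_one (X (Sum.inr j) : R), X_pow_eq_monomial]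
        rw [hXj, monomial_mul, smul_monomial]
        congr 1
        · rw [add_comm, hDE]
        · rw [hD'i0, smul_eq_mul, mul_one, one_mul]
          push_cast
          ring
      set F := Finsupp.single (Sum.inl i0) 1 + (D' - Finsupp.single (Sum.inl j) 1) with hF
      have hterm1 : (X (Sum.inl i0) : R) * monomial (D' - Finsupp.single (Sum.inl j) 1)
          ((1:ℝ) * (D' (Sum.inl j) : ℝ))
          = ((D' (Sum.inl j) : ℕ) : ℝ) • monomial F (1:ℝ) := by
        have hXi : (X (Sum.inl i0) : R) = monomial (Finsupp.single (Sum.inl i0) 1) 1 := by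
          rw [← pow_one (X (Sum.inl i0) : R), X_pow_eq_monomial]
        rw [hXi, monomial_mul, smul_monomial, hF]
        congr 1
        simp
      have hFinr : ∀ i : Fin n, F (Sum.inr i) = D' (Sum.inr i) := by
        intro i
        simp [hF, Finsupp.add_apply, Finsupp.tsub_apply, Finsupp.single_apply]
      have hCF : C (monomial F 1) = 0 := by
        apply ih F
        · rw [Finset.sum_congr rfl (fun i _ => hFinr i)]
          exact hsum'
        · have : (Finset.univ.sup fun i => F (Sum.inr i))
              = (Finset.univ.sup fun i => D' (Sum.inr i)) := by
            apply Finset.sup_congr rfl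
            intro i _
            exact hFinr i
          rw [this]
          exact hsup'
      rw [hterm1, hterm2, map_sub, map_smul, map_smul, hCF, smul_zero, zero_sub,
        neg_eq_zero] at hbr
      have hne : ((D (Sum.inr i0) + 1 : ℕ) : ℝ) ≠ 0 := by
        exact Nat.cast_ne_zero.2 (Nat.succ_ne_zero _)
      have h2 := congrArg (fun z => (((D (Sum.inr i0) + 1 : ℕ) : ℝ))⁻¹ • z) hbr
      simp only [smul_smul, smul_zero, inv_mul_cancel₀ hne, one_smul] at h2
      exact h2
  -- Final assembly
  intro S hS
  rw [S.as_sum, map_sum]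
  apply Finset.sum_eq_zero
  intro d hd
  have hw : Finsupp.weight (xiWeight n) d = k + 1 := hS (mem_support_iff.1 hd)
  rw [weight_xiWeight] at hw
  have h1 : (monomial d (coeff d S) : R) = (coeff d S) • monomial d 1 := by
    rw [smul_monomial, smul_eq_mul, mul_one]
  rw [h1, map_smul, main (k+1) d hw (by omega), smul_zero]
end
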